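/- Assume m ≥ 3. Then every vertex x of G₂ whose zero-set Z(x) is a singleton has eccentricity exactly 2, and every vertex x with |Z(x)| ≥ 2 has eccentricity at least 3; consequently the radius of G₂ is 2 and the center of G₂ is exactly the union of the classes X_{{i}} over i ∈ {1,…,m}. -/

import Mathlib

open Finset

abbrev NN (m : ℕ) (p : Fin m → ℕ) : ℕ := ∏ i, p i

abbrev Vtx (m : ℕ) (p : Fin m → ℕ) : Type :=
  {x : ZMod (NN m p) // x ≠ 0 ∧ ¬ IsUnit x}

/-- The induced subgraph `G₂` of the comaximal graph of `ℤ/nℤ` on nonzero nonunits. -/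
def G2 (m : ℕ) (p : Fin m → ℕ) : SimpleGraph (Vtx m p) where
  Adj x y := x ≠ y ∧ Ideal.span ({x.1, y.1} : Set (ZMod (NN m p))) = ⊤
  symm := by
    constructor
    rintro x y ⟨hxy, h⟩
    exact ⟨hxy.symm, by rwa [Set.pair_comm]⟩
  loopless := by constructor; rintro x ⟨h, -⟩; exact h rfl

/-- The zero-set of `x`: indices `i` where the image of `x` in `ℤ/p_iℤ` is zero. -/
def Z (m : ℕ) (p : Fin m → ℕ) (x : ZMod (NN m p)) : Finset (Fin m) :=
  Finset.univ.filter fun i =>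
    (ZMod.castHom (Finset.dvd_prod_of_mem p (Finset.mem_univ i)) (ZMod (p i))) x = 0

/-- The class `X_S` of vertices of `G₂` with zero-set `S`. -/
def XS (m : ℕ) (p : Fin m → ℕ) (S : Finset (Fin m)) : Set (Vtx m p) :=
  {x | Z m p x.1 = S}

/-- Eccentricity of a vertex: the maximum distance from it to any vertex. -/
noncomputable def ecc {V : Type*} (G : SimpleGraph V) (x : V) : ℕ :=
  sSup {d | ∃ y, G.dist x y = d}

/-- Radius: the minimum eccentricity over all vertices. -/
noncomputable def gradius {V : Type*} (G : SimpleGraph V) : ℕ :=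
  sInf {d | ∃ x, ecc G x = d}

/-! By the Chinese remainder theorem `ℤ/nℤ ≅ ∏ ℤ/p_iℤ`, two elements generate the unit ideal iff
their zero-sets are disjoint, and every nonempty proper subset of indices is the zero-set of a
vertex. Hence two vertices have a common neighbour iff their zero-sets do not cover all indices,
and every vertex is adjacent to a vertex with a singleton zero-set, so all distances are at
most 3.

A vertex `x` with `Z x = {i}` is within distance 2 of every `y`: either `i ∉ Z y` and they are
adjacent, or `Z x ∪ Z y = Z y` misses an index. Since `m ≥ 3`, some `{i, k}` is a proper subset,
and a vertex with that zero-set is at distance exactly 2 from `x`. If instead `i ∈ Z x` and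
`|Z x| ≥ 2`, the vertex `y` with `Z y = {i} ∪ (Z x)ᶜ` is not adjacent to `x` (both vanish at `i`)
and shares no neighbour with it (`Z x ∪ Z y` is everything), so `d(x, y) = 3`. -/

namespace SimpleGraph

variable {V : Type*} {G : SimpleGraph V} {x y z : V}

lemma edist_le_two_of_adj_of_adj (hxz : G.Adj x z) (hzy : G.Adj z y) : G.edist x y ≤ 2 := by
  simpa using (Walk.cons hxz (Walk.cons hzy Walk.nil)).edist_le

end SimpleGraph

section Eccentricity

variable {V : Type*} {G : SimpleGraph V} {x : V}

lemma ecc_le_of_forall_edist_le {k : ℕ} (h : ∀ y, G.edist x y ≤ k) : ecc G x ≤ k :=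
  csSup_le ⟨0, x, G.dist_self⟩ (by rintro _ ⟨y, rfl⟩; exact ENat.toNat_le_of_le_natCast (h y))

lemma le_ecc_of_edist_eq {B k : ℕ} (hB : ∀ y, G.edist x y ≤ B) {y : V} (hy : G.edist x y = k) :
    k ≤ ecc G x :=
  le_csSup ⟨B, by rintro _ ⟨z, rfl⟩; exact ENat.toNat_le_of_le_natCast (hB z)⟩
    ⟨y, by simp [SimpleGraph.dist, hy]⟩

lemma ecc_eq_of_forall_edist_le {k : ℕ} (h : ∀ y, G.edist x y ≤ k) (hk : ∃ y, G.edist x y = k) :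
    ecc G x = k :=
  (ecc_le_of_forall_edist_le h).antisymm (hk.elim fun _ hy => le_ecc_of_edist_eq h hy)

lemma gradius_eq_of_ecc_eq {r : ℕ} (hx : ecc G x = r) (h : ∀ y, r ≤ ecc G y) : gradius G = r :=
  IsLeast.csInf_eq ⟨⟨x, hx⟩, by rintro _ ⟨y, rfl⟩; exact h y⟩

end Eccentricity

section ZeroSet

variable {m : ℕ} {p : Fin m → ℕ} [∀ i, Fact (p i).Prime]

lemma pairwise_coprime_of_injective (hinj : Function.Injective p) :
    Pairwise (Function.onFun Nat.Coprime p) :=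
  fun _ _ hij => (Nat.coprime_primes Fact.out Fact.out).mpr (hinj.ne hij)

noncomputable def crt (hinj : Function.Injective p) : ZMod (NN m p) ≃+* Π i, ZMod (p i) :=
  ZMod.prodEquivPi p (pairwise_coprime_of_injective hinj)

lemma mem_Z_iff (hinj : Function.Injective p) {x : ZMod (NN m p)} {i : Fin m} :
    i ∈ Z m p x ↔ crt hinj x i = 0 := by
  simp only [Z, mem_filter, mem_univ, true_and, crt, ZMod.prodEquivPi_apply]

lemma Z_eq_empty_iff_isUnit (hinj : Function.Injective p) (x : ZMod (NN m p)) :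
    Z m p x = ∅ ↔ IsUnit x := by
  rw [← isUnit_map_iff (crt hinj), Pi.isUnit_iff, eq_empty_iff_forall_notMem]
  simp only [mem_Z_iff hinj, isUnit_iff_ne_zero]

lemma Z_eq_univ_iff (hinj : Function.Injective p) (x : ZMod (NN m p)) :
    Z m p x = univ ↔ x = 0 := by
  rw [eq_univ_iff_forall, ← map_eq_zero_iff (crt hinj) (crt hinj).injective, funext_iff]
  simp only [mem_Z_iff hinj, Pi.zero_apply]

lemma Z_crt_symm_indicator (hinj : Function.Injective p) (S : Finset (Fin m)) :
    Z m p ((crt hinj).symm fun i => if i ∈ S then 0 else 1) = S := by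
  ext i
  simp [mem_Z_iff hinj]

lemma span_pair_eq_top_iff (hinj : Function.Injective p) (x y : ZMod (NN m p)) :
    Ideal.span {x, y} = ⊤ ↔ Disjoint (Z m p x) (Z m p y) := by
  rw [disjoint_left]
  constructor
  · intro h i hx hy
    obtain ⟨a, b, hab⟩ := Ideal.mem_span_pair.mp (h ▸ Submodule.mem_top : (1 : ZMod _) ∈ _)
    have := congrFun (congrArg (crt hinj) hab) i
    simp [(mem_Z_iff hinj).mp hx, (mem_Z_iff hinj).mp hy] at this
  · intro h
    -- `c` is the idempotent supported on `Z x`, so `x + c * y` vanishes in no factor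
    set c := (crt hinj).symm fun i => if crt hinj x i = 0 then 1 else 0
    refine Ideal.eq_top_of_isUnit_mem _ (Ideal.mem_span_pair.mpr ⟨1, c, rfl⟩) ?_
    rw [← Z_eq_empty_iff_isUnit hinj, eq_empty_iff_forall_notMem]
    intro i hi
    rw [mem_Z_iff hinj] at hi
    by_cases hxi : crt hinj x i = 0
    · refine h ((mem_Z_iff hinj).mpr hxi) ((mem_Z_iff hinj).mpr ?_)
      simpa [c, hxi] using hi
    · simp [c, hxi] at hi

end ZeroSet

section Graph

variable {m : ℕ} {p : Fin m → ℕ} [∀ i, Fact (p i).Prime]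

lemma Z_nonempty (hinj : Function.Injective p) (v : Vtx m p) : (Z m p v.1).Nonempty :=
  nonempty_iff_ne_empty.mpr fun h => v.2.2 ((Z_eq_empty_iff_isUnit hinj _).mp h)

lemma Z_ne_univ (hinj : Function.Injective p) (v : Vtx m p) : Z m p v.1 ≠ univ :=
  fun h => v.2.1 ((Z_eq_univ_iff hinj _).mp h)

lemma exists_Z_eq_singleton_or_two_le_card (hinj : Function.Injective p) (v : Vtx m p) :
    (∃ i, Z m p v.1 = {i}) ∨ 2 ≤ (Z m p v.1).card := by
  rw [← card_eq_one]
  have := (Z_nonempty hinj v).card_pos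
  omega

lemma exists_vtx_Z_eq (hinj : Function.Injective p) {S : Finset (Fin m)} (hS : S.Nonempty)
    (hS' : S ≠ univ) : ∃ v : Vtx m p, Z m p v.1 = S := by
  refine ⟨⟨_, fun h => hS' ?_, fun h => hS.ne_empty ?_⟩, Z_crt_symm_indicator hinj S⟩
  · simpa only [Z_crt_symm_indicator] using (Z_eq_univ_iff hinj _).mpr h
  · simpa only [Z_crt_symm_indicator] using (Z_eq_empty_iff_isUnit hinj _).mpr h

lemma exists_vtx_Z_eq_singleton (hinj : Function.Injective p) {v : Vtx m p} {b : Fin m}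
    (hb : b ∉ Z m p v.1) : ∃ z : Vtx m p, Z m p z.1 = {b} := by
  obtain ⟨a, ha⟩ := Z_nonempty hinj v
  refine exists_vtx_Z_eq hinj (singleton_nonempty b) fun h => ?_
  exact hb (mem_singleton.mp (h ▸ mem_univ a) ▸ ha)

lemma G2_adj_iff (hinj : Function.Injective p) {x y : Vtx m p} :
    (G2 m p).Adj x y ↔ x ≠ y ∧ Disjoint (Z m p x.1) (Z m p y.1) :=
  and_congr_right' (span_pair_eq_top_iff hinj x.1 y.1)

lemma G2_adj_of_Z_eq_singleton (hinj : Function.Injective p) {x z : Vtx m p} {b : Fin m}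
    (hz : Z m p z.1 = {b}) (hb : b ∉ Z m p x.1) : (G2 m p).Adj x z := by
  refine (G2_adj_iff hinj).mpr ⟨?_, by rwa [hz, disjoint_singleton_right]⟩
  rintro rfl
  exact hb (hz ▸ mem_singleton_self b)

lemma G2_commonNeighbors_nonempty_iff (hinj : Function.Injective p) (x y : Vtx m p) :
    ((G2 m p).commonNeighbors x y).Nonempty ↔ Z m p x.1 ∪ Z m p y.1 ≠ univ := by
  constructor
  · rintro ⟨z, hxz, hyz⟩ hcover
    obtain ⟨i, hi⟩ := Z_nonempty hinj z
    rcases mem_union.mp (hcover ▸ mem_univ i) with hix | hiy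
    · exact disjoint_left.mp ((G2_adj_iff hinj).mp hxz).2 hix hi
    · exact disjoint_left.mp ((G2_adj_iff hinj).mp hyz).2 hiy hi
  · intro h
    obtain ⟨b, hb⟩ : ∃ b, b ∉ Z m p x.1 ∪ Z m p y.1 := by simpa [eq_univ_iff_forall] using h
    rw [mem_union, not_or] at hb
    obtain ⟨z, hz⟩ := exists_vtx_Z_eq_singleton hinj hb.1
    exact ⟨z, G2_adj_of_Z_eq_singleton hinj hz hb.1, G2_adj_of_Z_eq_singleton hinj hz hb.2⟩

lemma G2_edist_le_two_of_Z_eq_singleton (hinj : Function.Injective p) {x : Vtx m p} {i : Fin m}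
    (hx : Z m p x.1 = {i}) (y : Vtx m p) : (G2 m p).edist x y ≤ 2 := by
  by_cases hxy : x = y
  · simp [hxy]
  by_cases hi : i ∈ Z m p y.1
  · obtain ⟨z, hxz, hyz⟩ := (G2_commonNeighbors_nonempty_iff hinj x y).mpr <| by
      rw [hx, singleton_union, insert_eq_of_mem hi]
      exact Z_ne_univ hinj y
    exact SimpleGraph.edist_le_two_of_adj_of_adj hxz hyz.symm
  · have hadj : (G2 m p).Adj x y :=
      (G2_adj_iff hinj).mpr ⟨hxy, by rwa [hx, disjoint_singleton_left]⟩
    rw [SimpleGraph.edist_eq_one_iff_adj.mpr hadj]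
    norm_num

lemma G2_edist_le_three (hinj : Function.Injective p) (x y : Vtx m p) :
    (G2 m p).edist x y ≤ 3 := by
  obtain ⟨b, hb⟩ : ∃ b, b ∉ Z m p y.1 := by simpa [eq_univ_iff_forall] using Z_ne_univ hinj y
  obtain ⟨z, hz⟩ := exists_vtx_Z_eq_singleton hinj hb
  calc (G2 m p).edist x y ≤ (G2 m p).edist z x + (G2 m p).edist z y := by
        rw [SimpleGraph.edist_comm (u := z)]; exact SimpleGraph.edist_triangle
    _ ≤ 2 + 1 := add_le_add (G2_edist_le_two_of_Z_eq_singleton hinj hz x)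
        (SimpleGraph.edist_eq_one_iff_adj.mpr (G2_adj_of_Z_eq_singleton hinj hz hb).symm).le
    _ = 3 := by norm_num

lemma exists_G2_edist_eq_two (hm : 3 ≤ m) (hinj : Function.Injective p) {x : Vtx m p}
    {i : Fin m} (hx : Z m p x.1 = {i}) : ∃ y, (G2 m p).edist x y = 2 := by
  have : Nontrivial (Fin m) := Fin.nontrivial_iff_two_le.mpr (by omega)
  obtain ⟨k, hk⟩ := exists_ne i
  have hik : ({i, k} : Finset (Fin m)) ≠ univ := fun h => by
    have := card_le_two (a := i) (b := k)
    rw [h, card_univ, Fintype.card_fin] at this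
    omega
  obtain ⟨y, hy⟩ := exists_vtx_Z_eq hinj (insert_nonempty i {k}) hik
  refine ⟨y, SimpleGraph.edist_eq_two_iff.mpr ⟨?_, ?_, ?_⟩⟩
  · rintro rfl
    exact hk (mem_singleton.mp (hx ▸ hy ▸ mem_insert_of_mem (mem_singleton_self k)))
  · rw [G2_adj_iff hinj, hx, hy]
    simp
  · rwa [G2_commonNeighbors_nonempty_iff hinj, hx, hy, singleton_union,
      insert_eq_of_mem (mem_insert_self i {k})]

lemma exists_G2_edist_eq_three (hinj : Function.Injective p) {x : Vtx m p}
    (hx : 2 ≤ (Z m p x.1).card) : ∃ y, (G2 m p).edist x y = 3 := by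
  obtain ⟨i, hi⟩ := Z_nonempty hinj x
  obtain ⟨j, hj, hji⟩ := exists_mem_ne hx i
  -- `y` vanishes exactly at `i` and off `Z x`, so `Z x ∩ Z y = {i}` and `Z x ∪ Z y = univ`
  obtain ⟨y, hy⟩ := exists_vtx_Z_eq hinj (S := univ \ (Z m p x.1).erase i) ⟨i, by simp⟩
    (fun h => by simpa [hj, hji] using eq_univ_iff_forall.mp h j)
  have hcover : Z m p x.1 ∪ Z m p y.1 = univ := by
    ext j
    by_cases j ∈ Z m p x.1 <;> simp_all
  have h2 : 2 < (G2 m p).edist x y := by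
    refine SimpleGraph.two_lt_edist_iff.mpr ⟨?_, ?_, ?_⟩
    · rintro rfl
      exact Z_ne_univ hinj x (by simpa using hcover)
    · rw [G2_adj_iff hinj, not_and, not_disjoint_iff]
      exact fun _ => ⟨i, hi, by simp [hy]⟩
    · rw [← Set.not_nonempty_iff_eq_empty, G2_commonNeighbors_nonempty_iff hinj, not_not]
      exact hcover
  exact ⟨y, le_antisymm (G2_edist_le_three hinj x y) (Order.add_one_le_of_lt h2)⟩

lemma ecc_G2_of_Z_eq_singleton (hm : 3 ≤ m) (hinj : Function.Injective p) {x : Vtx m p}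
    {i : Fin m} (hx : Z m p x.1 = {i}) : ecc (G2 m p) x = 2 :=
  ecc_eq_of_forall_edist_le (G2_edist_le_two_of_Z_eq_singleton hinj hx)
    (exists_G2_edist_eq_two hm hinj hx)

lemma three_le_ecc_G2 (hinj : Function.Injective p) {x : Vtx m p}
    (hx : 2 ≤ (Z m p x.1).card) : 3 ≤ ecc (G2 m p) x :=
  (exists_G2_edist_eq_three hinj hx).elim fun _ hy =>
    le_ecc_of_edist_eq (G2_edist_le_three hinj x) hy

lemma two_le_ecc_G2 (hm : 3 ≤ m) (hinj : Function.Injective p) (x : Vtx m p) :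
    2 ≤ ecc (G2 m p) x := by
  rcases exists_Z_eq_singleton_or_two_le_card hinj x with ⟨i, hi⟩ | hx
  · exact (ecc_G2_of_Z_eq_singleton hm hinj hi).ge
  · exact (three_le_ecc_G2 hinj hx).trans' (by norm_num)

lemma ecc_G2_eq_two_iff (hm : 3 ≤ m) (hinj : Function.Injective p) (x : Vtx m p) :
    ecc (G2 m p) x = 2 ↔ ∃ i, Z m p x.1 = {i} := by
  refine ⟨fun h => ?_, fun ⟨i, hi⟩ => ecc_G2_of_Z_eq_singleton hm hinj hi⟩
  rcases exists_Z_eq_singleton_or_two_le_card hinj x with hx | hx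
  · exact hx
  · exact absurd (three_le_ecc_G2 hinj hx) (by omega)

end Graph

theorem stmt18 (m : ℕ) (hm : 3 ≤ m) (p : Fin m → ℕ) (hp : ∀ i, (p i).Prime)
    (hmono : StrictMono p) :
    (∀ x : Vtx m p, (Z m p x.1).card = 1 → ecc (G2 m p) x = 2) ∧
    (∀ x : Vtx m p, 2 ≤ (Z m p x.1).card → 3 ≤ ecc (G2 m p) x) ∧
    gradius (G2 m p) = 2 ∧
    {x : Vtx m p | ecc (G2 m p) x = gradius (G2 m p)} = ⋃ i : Fin m, XS m p {i} := by
  have : ∀ i, Fact (p i).Prime := fun i => ⟨hp i⟩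
  have hinj := hmono.injective
  have : Nontrivial (Fin m) := Fin.nontrivial_iff_two_le.mpr (by omega)
  obtain ⟨x₀, hx₀⟩ := exists_vtx_Z_eq hinj (singleton_nonempty (⟨0, by omega⟩ : Fin m))
    (singleton_ne_univ _)
  have hrad : gradius (G2 m p) = 2 :=
    gradius_eq_of_ecc_eq (ecc_G2_of_Z_eq_singleton hm hinj hx₀) (two_le_ecc_G2 hm hinj)
  refine ⟨fun x hx => (ecc_G2_eq_two_iff hm hinj x).mpr (card_eq_one.mp hx),
    fun x => three_le_ecc_G2 hinj, hrad, ?_⟩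
  ext x
  simp [XS, hrad, ecc_G2_eq_two_iff hm hinj]
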